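/- arXiv:2205.05408 — 5 statements merged into one kernel-verified Lean document; each statement's English description precedes it below -/
import Mathlib

section
/- If two polynomials with all positive coefficients have log-concave coefficient sequences, then so does their product. -/
/-!
Extend the coefficient sequences by zero to `ℤ`. For a nonnegative log-concave sequence without
internal zeros, log-concavity propagates from adjacent indices to
`a (s - 1) * a t ≤ a s * a (t - 1)` for all `s ≤ t`: the ratios `a s / a (s - 1)` decrease.
For `c = a * b`, the `2 × 2` Cauchy–Binet identity writes `c n ^ 2 - c (n - 1) * c (n + 1)` as
half a double sum over `s, t` of products of such a minor of `a` with one of `b`; both factors are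
nonnegative when `s ≤ t` and nonpositive when `t ≤ s`.
-/

open Polynomial Finset

variable {R : Type*}

-- The `2 × 2` case of the Cauchy–Binet formula.
lemma Finset.two_mul_sum_mul_sum_sub_sum_mul_sum [CommRing R] {ι : Type*} (S : Finset ι)
    (f₀ f₁ g₀ g₁ : ι → R) :
    2 * ((∑ s ∈ S, f₀ s * g₀ s) * (∑ s ∈ S, f₁ s * g₁ s) -
      (∑ s ∈ S, f₀ s * g₁ s) * (∑ s ∈ S, f₁ s * g₀ s)) =
    ∑ s ∈ S, ∑ t ∈ S,
      (f₀ s * f₁ t - f₀ t * f₁ s) * (g₀ s * g₁ t - g₀ t * g₁ s) := by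
  have expand : ∀ s t, (f₀ s * f₁ t - f₀ t * f₁ s) * (g₀ s * g₁ t - g₀ t * g₁ s) =
      f₀ s * g₀ s * (f₁ t * g₁ t) + f₀ t * g₀ t * (f₁ s * g₁ s) -
        f₀ s * g₁ s * (f₁ t * g₀ t) - f₀ t * g₁ t * (f₁ s * g₀ s) := by
    intros; ring
  simp only [expand, sum_add_distrib, sum_sub_distrib]
  rw [sum_comm (f := fun s t => f₀ t * g₀ t * (f₁ s * g₁ s)),
    sum_comm (f := fun s t => f₀ t * g₁ t * (f₁ s * g₀ s))]
  simp only [← sum_mul_sum]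
  ring

lemma Finset.sum_mul_sum_le_sum_mul_sum_of_minors [CommRing R] [LinearOrder R]
    [IsStrictOrderedRing R] {ι : Type*} (S : Finset ι) {f₀ f₁ g₀ g₁ : ι → R}
    (h : ∀ s ∈ S, ∀ t ∈ S,
      0 ≤ (f₀ s * f₁ t - f₀ t * f₁ s) * (g₀ s * g₁ t - g₀ t * g₁ s)) :
    (∑ s ∈ S, f₀ s * g₁ s) * (∑ s ∈ S, f₁ s * g₀ s) ≤
      (∑ s ∈ S, f₀ s * g₀ s) * (∑ s ∈ S, f₁ s * g₁ s) := by
  have := two_mul_sum_mul_sum_sub_sum_mul_sum S f₀ f₁ g₀ g₁ ▸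
    sum_nonneg fun s hs => sum_nonneg fun t ht => h s hs t ht
  linarith

-- Cross-multiplied form of `s ↦ a s / a (s - 1)` being antitone, meaningful where `a` vanishes.
def HasAntitoneRatios [Mul R] [LE R] (a : ℤ → R) : Prop :=
  ∀ ⦃s t : ℤ⦄, s ≤ t → a (s - 1) * a t ≤ a s * a (t - 1)

section

variable [CommRing R] [LinearOrder R] [IsStrictOrderedRing R] {a b : ℤ → R}

lemma HasAntitoneRatios.of_mul_le_sq (h0 : ∀ n, 0 ≤ a n)
    (hgap : ∀ ⦃m n k⦄, m < n → n < k → a n = 0 → a m = 0 ∨ a k = 0)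
    (hlc : ∀ n, a (n - 1) * a (n + 1) ≤ a n ^ 2) : HasAntitoneRatios a := by
  intro s t hst
  induction t, hst using Int.leInduction with
  | base => rw [mul_comm]
  | succ t hst ih =>
    rw [add_sub_cancel_right]
    rcases (h0 t).eq_or_lt with ht | ht
    · rcases hgap (by omega : s - 1 < t) (lt_add_one t) ht.symm with h | h <;>
        simp [h, ← ht]
    · refine le_of_mul_le_mul_right ?_ ht
      calc a (s - 1) * a (t + 1) * a t = a (s - 1) * a t * a (t + 1) := by ring
        _ ≤ a s * a (t - 1) * a (t + 1) := by gcongr; exact h0 _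
        _ = a s * (a (t - 1) * a (t + 1)) := by ring
        _ ≤ a s * a t ^ 2 := by gcongr; exacts [h0 _, hlc t]
        _ = a s * a t * a t := by ring

lemma HasAntitoneRatios.sum_mul_sum_le (ha : HasAntitoneRatios a) (hb : HasAntitoneRatios b)
    (S : Finset ℤ) (n : ℤ) :
    (∑ s ∈ S, a (s - 1) * b (n - s)) * (∑ s ∈ S, a s * b (n + 1 - s)) ≤
      (∑ s ∈ S, a s * b (n - s)) * (∑ s ∈ S, a (s - 1) * b (n + 1 - s)) := by
  rw [mul_comm]
  refine sum_mul_sum_le_sum_mul_sum_of_minors S fun s _ t _ => ?_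
  have hb' : ∀ ⦃u v⦄, u ≤ v →
      b (n - v) * b (n + 1 - u) ≤ b (n + 1 - v) * b (n - u) := by
    intro u v huv
    simpa only [sub_sub_cancel_left, add_sub_cancel_right, sub_right_comm _ _ (1 : ℤ)] using
      hb (show n + 1 - v ≤ n + 1 - u by omega)
  rcases le_total s t with hst | hst
  · have := ha hst; have := hb' hst
    exact mul_nonneg (by linarith) (by linarith)
  · have := ha hst; have := hb' hst
    exact mul_nonneg_of_nonpos_of_nonpos (by linarith) (by linarith)

end

namespace Polynomial

def coeffInt [Semiring R] (p : R[X]) (n : ℤ) : R := if 0 ≤ n then p.coeff n.toNat else 0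

section coeffInt

variable [Semiring R] (p q : R[X])

@[simp]
lemma coeffInt_natCast (n : ℕ) : p.coeffInt n = p.coeff n := by
  simp [coeffInt]

lemma coeffInt_of_neg {n : ℤ} (hn : n < 0) : p.coeffInt n = 0 := by
  simp [coeffInt, not_le.2 hn]

lemma coeffInt_of_natDegree_lt {n : ℤ} (hn : p.natDegree < n) : p.coeffInt n = 0 := by
  lift n to ℕ using by omega
  simpa using coeff_eq_zero_of_natDegree_lt (by exact_mod_cast hn)

lemma coeffInt_mul (n : ℤ) {S : Finset ℤ} (hS : Icc 0 n ⊆ S) :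
    (p * q).coeffInt n = ∑ s ∈ S, p.coeffInt s * q.coeffInt (n - s) := by
  have hvanish : ∀ s ∈ S, s ∉ Icc 0 n → p.coeffInt s * q.coeffInt (n - s) = 0 := by
    intro s _ hs
    rcases (by simp only [mem_Icc] at hs; omega : s < 0 ∨ n < s) with hs | hs
    · rw [coeffInt_of_neg _ hs, zero_mul]
    · rw [coeffInt_of_neg _ (by omega : n - s < 0), mul_zero]
  rw [← sum_subset hS hvanish]
  rcases lt_or_ge n 0 with hn | hn
  · simp [coeffInt_of_neg _ hn, Icc_eq_empty_of_lt hn]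
  lift n to ℕ using hn
  rw [coeffInt_natCast, coeff_mul, Nat.sum_antidiagonal_eq_sum_range_succ_mk]
  refine sum_nbij' (↑) Int.toNat (by simp) (fun s hs => ?_) (by simp)
    (fun s hs => by simp only [mem_Icc] at hs; omega) (fun i hi => ?_)
  · simp only [mem_range, mem_Icc] at hs ⊢; omega
  · simp only [mem_range] at hi
    rw [← Nat.cast_sub (by omega), coeffInt_natCast, coeffInt_natCast]

lemma coeffInt_mul_shift (n : ℤ) {S : Finset ℤ} (hS : Icc 1 (n + 1) ⊆ S) :
    (p * q).coeffInt n = ∑ s ∈ S, p.coeffInt (s - 1) * q.coeffInt (n + 1 - s) := by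
  rw [coeffInt_mul p q n (S := S.map (Equiv.subRight (1 : ℤ)).toEmbedding), sum_map]
  · simp [sub_sub_eq_add_sub]
  · intro s hs
    simp only [mem_map_equiv, Equiv.subRight_symm_apply]
    exact hS (by simp only [mem_Icc] at hs ⊢; omega)

end coeffInt

section order

variable [Semiring R] [PartialOrder R] {p q : R[X]}

lemma coeff_nonneg_of_coeff_pos (hp : ∀ i ≤ p.natDegree, 0 < p.coeff i) (i : ℕ) :
    0 ≤ p.coeff i := by
  rcases le_or_gt i p.natDegree with hi | hi
  · exact (hp i hi).le
  · rw [coeff_eq_zero_of_natDegree_lt hi]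

lemma coeff_mul_pos [IsStrictOrderedRing R] (hp : ∀ i ≤ p.natDegree, 0 < p.coeff i)
    (hq : ∀ i ≤ q.natDegree, 0 < q.coeff i) {i : ℕ} (hi : i ≤ p.natDegree + q.natDegree) :
    0 < (p * q).coeff i := by
  rw [coeff_mul]
  refine sum_pos' (fun x _ => mul_nonneg (coeff_nonneg_of_coeff_pos hp _)
    (coeff_nonneg_of_coeff_pos hq _)) ⟨(min i p.natDegree, i - min i p.natDegree), ?_, ?_⟩
  · rw [HasAntidiagonal.mem_antidiagonal]; omega
  · exact mul_pos (hp _ (min_le_right _ _)) (hq _ (by omega))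

end order

variable [CommRing R] [LinearOrder R] [IsStrictOrderedRing R] {p q : R[X]}

lemma hasAntitoneRatios_coeffInt (hpos : ∀ i ≤ p.natDegree, 0 < p.coeff i)
    (hlc : ∀ i, 0 < i → i < p.natDegree →
      p.coeff (i - 1) * p.coeff (i + 1) ≤ p.coeff i ^ 2) :
    HasAntitoneRatios p.coeffInt := by
  have hpos' : ∀ n : ℤ, 0 ≤ n → n ≤ p.natDegree → 0 < p.coeffInt n := by
    intro n hn0 hnd
    lift n to ℕ using hn0
    exact coeffInt_natCast p n ▸ hpos n (by exact_mod_cast hnd)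
  refine HasAntitoneRatios.of_mul_le_sq (fun n => ?_) (fun m n k hmn hnk hn => ?_) (fun n => ?_)
  · rcases lt_or_ge n 0 with hn | hn
    · rw [coeffInt_of_neg _ hn]
    · lift n to ℕ using hn
      simpa using coeff_nonneg_of_coeff_pos hpos n
  · by_cases hn0 : n < 0
    · exact .inl (coeffInt_of_neg _ (by omega))
    by_cases hnd : p.natDegree < n
    · exact .inr (coeffInt_of_natDegree_lt _ (by omega))
    exact absurd hn (hpos' n (by omega) (by omega)).ne'
  · by_cases hn0 : n ≤ 0
    · rw [coeffInt_of_neg _ (by omega), zero_mul]; positivity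
    by_cases hnd : p.natDegree ≤ n
    · rw [coeffInt_of_natDegree_lt p (n := n + 1) (by omega), mul_zero]; positivity
    lift n to ℕ using by omega
    rw [← Nat.cast_pred (by omega), ← Nat.cast_add_one, coeffInt_natCast, coeffInt_natCast,
      coeffInt_natCast]
    exact hlc n (by omega) (by omega)

lemma coeffInt_mul_sub_one_mul_add_one_le_sq (hp : HasAntitoneRatios p.coeffInt)
    (hq : HasAntitoneRatios q.coeffInt) (n : ℤ) :
    (p * q).coeffInt (n - 1) * (p * q).coeffInt (n + 1) ≤ (p * q).coeffInt n ^ 2 := by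
  have hS {k m : ℤ} (hk : 0 ≤ k) (hm : m ≤ n + 1) : Icc k m ⊆ Icc 0 (n + 1) :=
    Icc_subset_Icc hk hm
  calc (p * q).coeffInt (n - 1) * (p * q).coeffInt (n + 1)
      = (∑ s ∈ Icc 0 (n + 1), p.coeffInt (s - 1) * q.coeffInt (n - s)) *
          ∑ s ∈ Icc 0 (n + 1), p.coeffInt s * q.coeffInt (n + 1 - s) := by
        rw [coeffInt_mul_shift p q (n - 1) (hS zero_le_one (by omega)),
          coeffInt_mul p q (n + 1) (hS le_rfl le_rfl), sub_add_cancel]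
    _ ≤ (∑ s ∈ Icc 0 (n + 1), p.coeffInt s * q.coeffInt (n - s)) *
          ∑ s ∈ Icc 0 (n + 1), p.coeffInt (s - 1) * q.coeffInt (n + 1 - s) :=
        hp.sum_mul_sum_le hq _ n
    _ = (p * q).coeffInt n ^ 2 := by
        rw [← coeffInt_mul p q n (hS le_rfl (by omega)),
          ← coeffInt_mul_shift p q n (hS zero_le_one le_rfl), sq]

end Polynomial

/-- If two polynomials with all positive coefficients (up to their degrees) have
log-concave coefficient sequences, then so does their product. -/
theorem mul_log_concave (p r : Polynomial ℝ)
    (hp_pos : ∀ i ≤ p.natDegree, 0 < p.coeff i)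
    (hr_pos : ∀ i ≤ r.natDegree, 0 < r.coeff i)
    (hp_lc : ∀ i, 0 < i → i < p.natDegree →
      p.coeff (i - 1) * p.coeff (i + 1) ≤ p.coeff i ^ 2)
    (hr_lc : ∀ i, 0 < i → i < r.natDegree →
      r.coeff (i - 1) * r.coeff (i + 1) ≤ r.coeff i ^ 2) :
    (∀ i ≤ (p * r).natDegree, 0 < (p * r).coeff i) ∧
    (∀ i, 0 < i → i < (p * r).natDegree →
      (p * r).coeff (i - 1) * (p * r).coeff (i + 1) ≤ (p * r).coeff i ^ 2) := by
  refine ⟨fun i hi => coeff_mul_pos hp_pos hr_pos (hi.trans natDegree_mul_le), fun i hi _ => ?_⟩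
  have := coeffInt_mul_sub_one_mul_add_one_le_sq (hasAntitoneRatios_coeffInt hp_pos hp_lc)
    (hasAntitoneRatios_coeffInt hr_pos hr_lc) i
  rwa [← Nat.cast_pred hi, ← Nat.cast_add_one, coeffInt_natCast, coeffInt_natCast,
    coeffInt_natCast] at this
end

section
/- For every n ≥ 1, the coefficient sequence of ∏_{k=0}^{n-1} (1 + q + ... + q^k) is log-concave. -/
open Polynomial Finset

def LCQ (f : ℕ → ℕ) : Prop := ∀ u v, u ≤ v → f u * f (v+1) ≤ f (u+1) * f v

lemma inner_lemma (f : ℕ → ℕ) (hf : LCQ f) :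
    ∀ d p p' q', p + d = p' → p' ≤ q' → f p * f (q' + d) ≤ f p' * f q' := by
  intro d
  induction d with
  | zero => intro p p' q' h1 h2; simp_all
  | succ d ih =>
    intro p p' q' h1 h2
    have step : f p * f (q' + (d+1)) ≤ f (p+1) * f (q' + d) := by
      have := hf p (q' + d) (by omega)
      exact this
    calc f p * f (q' + (d+1)) ≤ f (p+1) * f (q' + d) := step
      _ ≤ f p' * f q' := ih (p+1) p' q' (by omega) h2

lemma sum_sum_nonneg (g : ℕ → ℕ → ℤ) (h : ∀ k l, 0 ≤ g k l + g l k) (N : ℕ) :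
    0 ≤ ∑ k ∈ range N, ∑ l ∈ range N, g k l := by
  induction N with
  | zero => simp
  | succ N ih =>
    have hdiag : 0 ≤ g N N := by have := h N N; linarith
    have hsum : 0 ≤ ∑ k ∈ range N, (g k N + g N k) :=
      Finset.sum_nonneg fun k _ => h k N
    rw [Finset.sum_range_succ]
    have e : ∀ k, ∑ l ∈ range (N+1), g k l = (∑ l ∈ range N, g k l) + g k N :=
      fun k => Finset.sum_range_succ _ _
    simp only [e]
    rw [Finset.sum_add_distrib]
    have := Finset.sum_add_distrib (s := range N) (f := fun k => g k N) (g := fun k => g N k)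
    linarith [ih]

lemma conv_LCQ (a b : ℕ → ℕ) (ha : LCQ a) (hb : LCQ b) :
    LCQ (fun n => ∑ p ∈ range (n+1), a p * b (n - p)) := by
  intro u v huv
  dsimp only
  set r := v - u with hr
  set α : ℕ → ℤ := fun k => (a k : ℤ) with hα
  set α' : ℕ → ℤ := fun k => if r ≤ k then (a (k - r) : ℤ) else 0 with hα'
  set β : ℕ → ℤ := fun k => if k ≤ v then (b (v - k) : ℤ) else 0 with hβ
  set β' : ℕ → ℤ := fun k => if k ≤ v + 1 then (b (v + 1 - k) : ℤ) else 0 with hβ'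
  set N := v + 2 with hN
  -- the four sums
  have S1 : ∑ k ∈ range N, α k * β k
      = ((∑ p ∈ range (v+1), a p * b (v - p) : ℕ) : ℤ) := by
    rw [Finset.sum_range_succ]
    push_cast
    have : β (v+1) = 0 := by simp [hβ]
    rw [this, mul_zero, add_zero]
    refine Finset.sum_congr rfl fun k hk => ?_
    simp only [Finset.mem_range] at hk
    simp [hα, hβ, Nat.lt_succ_iff.mp hk]
  have S2 : ∑ k ∈ range N, α k * β' k
      = ((∑ p ∈ range (v+2), a p * b (v + 1 - p) : ℕ) : ℤ) := by
    push_cast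
    refine Finset.sum_congr rfl fun k hk => ?_
    simp only [Finset.mem_range] at hk
    simp only [hα, hβ', if_pos (show k ≤ v + 1 by omega)]
  have shift : ∀ (f : ℕ → ℤ), (∀ k, k < r → f k = 0) →
      ∑ k ∈ range N, f k = ∑ j ∈ range (u + 2), f (r + j) := by
    intro f hf
    have step1 : ∑ k ∈ range N, f k = ∑ k ∈ Finset.Ico r N, f k := by
      rw [Finset.range_eq_Ico,
        ← Finset.sum_Ico_consecutive _ (Nat.zero_le r) (show r ≤ N by omega)]
      rw [Finset.sum_eq_zero (fun k hk => hf k (by simp at hk; omega)), zero_add]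
    rw [step1, Finset.sum_Ico_eq_sum_range, show N - r = u + 2 by omega]
  have S3 : ∑ k ∈ range N, α' k * β k
      = ((∑ p ∈ range (u+1), a p * b (u - p) : ℕ) : ℤ) := by
    rw [shift (fun k => α' k * β k) (fun k hk => by simp [hα', Nat.not_le.mpr hk])]
    rw [Finset.sum_range_succ]
    push_cast
    have : β (r + (u + 1)) = 0 := by
      simp only [hβ, if_neg (show ¬ (r + (u + 1) ≤ v) by omega)]
    rw [this, mul_zero, add_zero]
    refine Finset.sum_congr rfl fun j hj => ?_
    simp only [Finset.mem_range] at hj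
    have h1 : r ≤ r + j := Nat.le_add_right _ _
    have h2 : r + j ≤ v := by omega
    simp only [hα', hβ, if_pos h1, if_pos h2]
    rw [show r + j - r = j by omega, show v - (r + j) = u - j by omega]
  have S4 : ∑ k ∈ range N, α' k * β' k
      = ((∑ p ∈ range (u+2), a p * b (u + 1 - p) : ℕ) : ℤ) := by
    rw [shift (fun k => α' k * β' k) (fun k hk => by simp [hα', Nat.not_le.mpr hk])]
    push_cast
    refine Finset.sum_congr rfl fun j hj => ?_
    simp only [Finset.mem_range] at hj
    have h1 : r ≤ r + j := Nat.le_add_right _ _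
    have h2 : r + j ≤ v + 1 := by omega
    simp only [hα', hβ', if_pos h1, if_pos h2]
    rw [show r + j - r = j by omega, show v + 1 - (r + j) = u + 1 - j by omega]
  -- key sign facts
  have keyA : ∀ k l, k ≤ l → α' k * α l ≤ α k * α' l := by
    intro k l hkl
    by_cases hrk : r ≤ k
    · have hrl : r ≤ l := le_trans hrk hkl
      simp only [hα', hα, if_pos hrk, if_pos hrl]
      by_cases hc : k ≤ l - r
      · have := inner_lemma a ha r (k - r) k (l - r) (by omega) hc
        have hq : l - r + r = l := by omega
        rw [hq] at this
        exact_mod_cast this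
      · have := inner_lemma a ha (l - k) (k - r) (l - r) k (by omega) (by omega)
        have hq : k + (l - k) = l := by omega
        rw [hq] at this
        calc (a (k-r) : ℤ) * a l = ((a (k-r) * a l : ℕ) : ℤ) := by push_cast; ring
          _ ≤ ((a (l-r) * a k : ℕ) : ℤ) := by exact_mod_cast this
          _ = (a k : ℤ) * a (l - r) := by push_cast; ring
    · simp only [hα', if_neg hrk, zero_mul]
      by_cases hrl : r ≤ l
      · simp only [if_pos hrl, hα]; positivity
      · simp [if_neg hrl]
  have keyB : ∀ k l, k ≤ l → β' k * β l ≤ β k * β' l := by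
    intro k l hkl
    by_cases hlv : l ≤ v
    · have hkv : k ≤ v := le_trans hkl hlv
      simp only [hβ, hβ', if_pos hlv, if_pos hkv, if_pos (by omega : k ≤ v + 1),
        if_pos (by omega : l ≤ v + 1)]
      have := hb (v - l) (v - k) (by omega)
      have h1 : v - l + 1 = v + 1 - l := by omega
      have h2 : v - k + 1 = v + 1 - k := by omega
      rw [h1, h2] at this
      calc (b (v+1-k) : ℤ) * b (v - l) = ((b (v-l) * b (v+1-k) : ℕ) : ℤ) := by push_cast; ring
        _ ≤ ((b (v+1-l) * b (v-k) : ℕ) : ℤ) := by exact_mod_cast this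
        _ = (b (v - k) : ℤ) * b (v + 1 - l) := by push_cast; ring
    · simp only [hβ, if_neg hlv, mul_zero]
      have h1 : (0:ℤ) ≤ β k := by simp only [hβ]; split <;> positivity
      have h2 : (0:ℤ) ≤ β' l := by simp only [hβ']; split <;> positivity
      exact mul_nonneg h1 h2
  -- assemble
  set g : ℕ → ℕ → ℤ := fun k l =>
    α' k * β' k * (α l * β l) - α' k * β k * (α l * β' l) with hg
  have hpair : ∀ k l, 0 ≤ g k l + g l k := by
    intro k l
    have hid : g k l + g l k
        = (α' k * α l - α' l * α k) * (β' k * β l - β k * β' l) := by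
      simp only [hg]; ring
    rw [hid]
    rcases le_total k l with h | h
    · rw [← neg_mul_neg]
      exact mul_nonneg (by linarith [keyA k l h]) (by linarith [keyB k l h])
    · have hid2 : (α' k * α l - α' l * α k) * (β' k * β l - β k * β' l)
          = (α' l * α k - α' k * α l) * (β' l * β k - β l * β' k) := by ring
      rw [hid2]
      rw [← neg_mul_neg]
      exact mul_nonneg (by linarith [keyA l k h]) (by linarith [keyB l k h])
  have expand : ∑ k ∈ range N, ∑ l ∈ range N, g k l
      = (∑ k ∈ range N, α' k * β' k) * (∑ l ∈ range N, α l * β l)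
        - (∑ k ∈ range N, α' k * β k) * (∑ l ∈ range N, α l * β' l) := by
    rw [Finset.sum_mul_sum, Finset.sum_mul_sum, ← Finset.sum_sub_distrib]
    exact Finset.sum_congr rfl fun k _ => by rw [← Finset.sum_sub_distrib]
  have hnn := sum_sum_nonneg g hpair N
  rw [expand, S1, S2, S3, S4] at hnn
  have hz := sub_nonneg.mp hnn
  exact_mod_cast hz

lemma coeff_window (m t : ℕ) :
    (∑ j ∈ range (m+1), (X : Polynomial ℕ) ^ j).coeff t = if t ≤ m then 1 else 0 := by
  rw [Polynomial.finset_sum_coeff]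
  simp [Polynomial.coeff_X_pow, Finset.sum_ite_eq, Nat.lt_succ_iff]

lemma window_LCQ (m : ℕ) : LCQ (fun t => if t ≤ m then 1 else 0) := by
  intro u v huv
  dsimp only
  split_ifs <;> simp_all <;> omega

lemma prod_LCQ (n : ℕ) :
    LCQ (fun i => (∏ k ∈ range n, ∑ j ∈ range (k+1), (X : Polynomial ℕ) ^ j).coeff i) := by
  induction n with
  | zero =>
    intro u v huv
    simp [Polynomial.coeff_one]
  | succ n ih =>
    have key : ∀ t, (∏ k ∈ range (n+1), ∑ j ∈ range (k+1), (X : Polynomial ℕ) ^ j).coeff t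
        = ∑ p ∈ range (t+1),
            (∏ k ∈ range n, ∑ j ∈ range (k+1), (X : Polynomial ℕ) ^ j).coeff p *
            (if t - p ≤ n then 1 else 0) := by
      intro t
      rw [Finset.prod_range_succ, Polynomial.coeff_mul,
        Finset.Nat.sum_antidiagonal_eq_sum_range_succ_mk]
      exact Finset.sum_congr rfl fun p _ => by rw [coeff_window]
    intro u v huv
    dsimp only
    rw [key u, key (v+1), key (u+1), key v]
    exact conv_LCQ _ (fun t => if t ≤ n then 1 else 0) ih (window_LCQ n) u v huv


/-- For every `n ≥ 1`, the coefficient sequence of `∏_{k=0}^{n-1} (1 + q + ⋯ + q^k)`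
is log-concave. -/
theorem flag_poincare_log_concave (n : ℕ) (hn : 1 ≤ n) (i : ℕ) :
    (∏ k ∈ Finset.range n, ∑ j ∈ Finset.range (k + 1), (X : Polynomial ℕ) ^ j).coeff i *
      (∏ k ∈ Finset.range n, ∑ j ∈ Finset.range (k + 1), (X : Polynomial ℕ) ^ j).coeff (i + 2) ≤
    (∏ k ∈ Finset.range n, ∑ j ∈ Finset.range (k + 1), (X : Polynomial ℕ) ^ j).coeff (i + 1) ^ 2 := by
  have h := prod_LCQ n i (i+1) (Nat.le_succ i)
  simpa [pow_two] using h
end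

section
/- For every n ≥ 1, the coefficient sequence of ∏_{k=0}^{n-1} (1 + q + ... + q^k) is unimodal: there exists m such that the coefficients weakly increase up to index m and weakly decrease afterwards. -/
open Polynomial Finset

/-- Coefficient function of a polynomial, extended by zero to negative integers. -/
private def Fc (P : Polynomial ℕ) : ℤ → ℕ := fun z => if 0 ≤ z then P.coeff z.toNat else 0

/-- `f` is symmetric about `d/2` and weakly increasing up to the middle. -/
private def SU (d : ℤ) (f : ℤ → ℕ) : Prop :=
  (∀ z, f z = f (d - z)) ∧ (∀ x : ℤ, 2 * x < d → f x ≤ f (x + 1))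

private lemma su_climb {d : ℤ} {f : ℤ → ℕ}
    (hmono : ∀ x : ℤ, 2 * x < d → f x ≤ f (x + 1)) :
    ∀ m : ℕ, ∀ a b : ℤ, a + m = b → 2 * b ≤ d + 1 → f a ≤ f b := by
  intro m
  induction m with
  | zero =>
    intro a b hab _
    simp only [Nat.cast_zero, add_zero] at hab
    rw [hab]
  | succ m ih =>
    intro a b hab hb
    have h1 : f a ≤ f (b - 1) := ih a (b - 1) (by push_cast at hab ⊢; omega) (by omega)
    have h2 : f (b - 1) ≤ f b := by
      have := hmono (b - 1) (by omega)
      simpa using this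
    exact le_trans h1 h2

private lemma su_mono {d : ℤ} {f : ℤ → ℕ} (h : SU d f) :
    ∀ a b : ℤ, a ≤ b → a + b ≤ d → f a ≤ f b := by
  obtain ⟨hsym, hmono⟩ := h
  intro a b hab habd
  rcases le_total b (d - b) with hb | hb
  · exact su_climb hmono (b - a).toNat a b (by omega) (by omega)
  · have h1 : f a ≤ f (d - b) :=
      su_climb hmono (d - b - a).toNat a (d - b) (by omega) (by omega)
    have h2 : f (d - b) = f b := (hsym (d - b)).trans (by ring_nf)
    omega

private lemma su_window {d : ℤ} {f : ℤ → ℕ} (h : SU d f) (k : ℕ) :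
    SU (d + k) (fun z => ∑ t ∈ Finset.range (k + 1), f (z - t)) := by
  obtain ⟨hsym, hmono⟩ := h
  constructor
  · intro z
    simp only
    have : ∀ t ∈ Finset.range (k + 1), f (d + k - z - t) = f (z - (k - t : ℕ)) := by
      intro t ht
      rw [Finset.mem_range] at ht
      have h1 : f (d + k - z - t) = f (d - (d + k - z - t)) := hsym _
      rw [h1]
      congr 1
      push_cast [Nat.cast_sub (by omega : t ≤ k)]
      ring
    rw [Finset.sum_congr rfl this]
    exact (Finset.sum_range_reflect (fun t => f (z - t)) (k + 1)).symm ▸ by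
      have := Finset.sum_range_reflect (fun t => f (z - t)) (k + 1)
      simp only [Nat.add_sub_cancel] at this
      omega
  · intro x hx
    simp only
    have e1 : ∑ t ∈ Finset.range (k + 1), f (x + 1 - t)
        = (∑ t ∈ Finset.range k, f (x - t)) + f (x + 1) := by
      rw [Finset.sum_range_succ']
      congr 1
      · apply Finset.sum_congr rfl
        intro t _
        congr 1
        push_cast
        ring
      · simp
    have e2 : ∑ t ∈ Finset.range (k + 1), f (x - t)
        = (∑ t ∈ Finset.range k, f (x - t)) + f (x - k) := by
      rw [Finset.sum_range_succ]
    rw [e1, e2]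
    have : f (x - k) ≤ f (x + 1) :=
      su_mono ⟨hsym, hmono⟩ (x - k) (x + 1) (by omega) (by omega)
    omega

/-- Multiplying by `1 + X + ⋯ + X^k` is a window sum on coefficients. -/
private lemma fc_mul (P : Polynomial ℕ) (k : ℕ) (z : ℤ) :
    Fc (P * ∑ j ∈ Finset.range (k + 1), (X : Polynomial ℕ) ^ j) z
      = ∑ t ∈ Finset.range (k + 1), Fc P (z - t) := by
  unfold Fc
  by_cases hz : 0 ≤ z
  · rw [if_pos hz]
    rw [Finset.mul_sum, Polynomial.finset_sum_coeff]
    apply Finset.sum_congr rfl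
    intro t ht
    rw [Polynomial.coeff_mul_X_pow']
    by_cases h : (t : ℤ) ≤ z
    · rw [if_pos (by omega : 0 ≤ z - t), if_pos (by omega : t ≤ z.toNat)]
      congr 1
      omega
    · rw [if_neg (by omega : ¬ (0 : ℤ) ≤ z - t), if_neg (by omega : ¬ t ≤ z.toNat)]
  · rw [if_neg hz]
    symm
    apply Finset.sum_eq_zero
    intro t _
    rw [if_neg (by omega : ¬ (0 : ℤ) ≤ z - t)]

private lemma su_prod (n : ℕ) :
    SU (∑ k ∈ Finset.range n, (k : ℤ))
      (Fc (∏ k ∈ Finset.range n, ∑ j ∈ Finset.range (k + 1), (X : Polynomial ℕ) ^ j)) := by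
  induction n with
  | zero =>
    simp only [Finset.range_zero, Finset.sum_empty, Finset.prod_empty]
    constructor
    · intro z
      unfold Fc
      simp only [Polynomial.coeff_one]
      split_ifs <;> omega
    · intro x hx
      unfold Fc
      rw [if_neg (by omega)]
      exact Nat.zero_le _
  | succ n ih =>
    rw [Finset.prod_range_succ, Finset.sum_range_succ]
    have hfun : Fc ((∏ k ∈ Finset.range n, ∑ j ∈ Finset.range (k + 1), (X : Polynomial ℕ) ^ j) *
        ∑ j ∈ Finset.range (n + 1), (X : Polynomial ℕ) ^ j)
        = fun z => ∑ t ∈ Finset.range (n + 1),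
            Fc (∏ k ∈ Finset.range n, ∑ j ∈ Finset.range (k + 1), (X : Polynomial ℕ) ^ j) (z - t) :=
      funext fun z => fc_mul _ n z
    rw [hfun]
    exact su_window ih n

/-- For every `n ≥ 1`, the coefficient sequence of `∏_{k=0}^{n-1} (1 + q + ⋯ + q^k)`
is unimodal. -/
theorem flag_poincare_unimodal (n : ℕ) (hn : 1 ≤ n) :
    ∃ m : ℕ,
      (∀ i, i < m →
        (∏ k ∈ Finset.range n, ∑ j ∈ Finset.range (k + 1), (X : Polynomial ℕ) ^ j).coeff i ≤
        (∏ k ∈ Finset.range n, ∑ j ∈ Finset.range (k + 1), (X : Polynomial ℕ) ^ j).coeff (i + 1)) ∧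
      (∀ i, m ≤ i →
        (∏ k ∈ Finset.range n, ∑ j ∈ Finset.range (k + 1), (X : Polynomial ℕ) ^ j).coeff (i + 1) ≤
        (∏ k ∈ Finset.range n, ∑ j ∈ Finset.range (k + 1), (X : Polynomial ℕ) ^ j).coeff i) := by
  set P := ∏ k ∈ Finset.range n, ∑ j ∈ Finset.range (k + 1), (X : Polynomial ℕ) ^ j with hP
  set D : ℕ := ∑ k ∈ Finset.range n, k with hD
  have hsu : SU (D : ℤ) (Fc P) := by
    have := su_prod n
    have hcast : (∑ k ∈ Finset.range n, (k : ℤ)) = (D : ℤ) := by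
      rw [hD]; push_cast; rfl
    rwa [hcast] at this
  obtain ⟨hsym, hmono⟩ := hsu
  have hFc : ∀ i : ℕ, Fc P (i : ℤ) = P.coeff i := by
    intro i
    unfold Fc
    rw [if_pos (by positivity), Int.toNat_natCast]
  refine ⟨(D + 1) / 2, ?_, ?_⟩
  · intro i hi
    rw [← hFc i, ← hFc (i + 1)]
    have h1 : 2 * (i : ℤ) < D := by omega
    have := hmono i h1
    have hc : ((i : ℤ) + 1) = ((i + 1 : ℕ) : ℤ) := by push_cast; ring
    rwa [hc] at this
  · intro i hi
    rw [← hFc i, ← hFc (i + 1)]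
    have hD2i : (D : ℤ) ≤ 2 * i + 1 := by omega
    have e1 : Fc P ((i : ℤ) + 1) = Fc P ((D : ℤ) - i - 1) := by
      rw [hsym ((i : ℤ) + 1)]
      congr 1; ring
    have e2 : Fc P ((D : ℤ) - i) = Fc P (i : ℤ) := by
      rw [hsym ((D : ℤ) - i)]
      congr 1; ring
    have step : Fc P ((D : ℤ) - i - 1) ≤ Fc P ((D : ℤ) - i - 1 + 1) :=
      hmono _ (by omega)
    have : ((D : ℤ) - i - 1 + 1) = (D : ℤ) - i := by ring
    rw [this] at step
    calc Fc P ((i : ℤ) + 1) = Fc P ((D : ℤ) - i - 1) := e1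
      _ ≤ Fc P ((D : ℤ) - i) := step
      _ = Fc P (i : ℤ) := e2
end

section
/- For a permutation w ∈ S_n of cycle type λ = (λ_1, ..., λ_k), the rational function ∏_{i=1}^{n}(1 − q^i) / ∏_{i=1}^{k}(1 − q^{λ_i}) is a polynomial in q with integer coefficients. -/
open Polynomial Finset

/-!
Among any `d` consecutive integers one is a multiple `jd` of `d`, and `1 - q^d ∣ 1 - q^{jd}`.
So if the parts of `λ` are peeled off one at a time, the part `d` can be matched with a factor
among the top `d` factors of `∏_{i ≤ n} (1 - q^i)`, leaving `∏_{i ≤ n - d} (1 - q^i)` for the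
remaining parts, whose sum is at most `n - d`.
-/

section OneSubPow

variable {R : Type*} [CommRing R]

theorem one_sub_pow_dvd_one_sub_pow_of_dvd (x : R) {d m : ℕ} (h : d ∣ m) :
    1 - x ^ d ∣ 1 - x ^ m := by
  obtain ⟨j, rfl⟩ := h
  rw [pow_mul]
  exact one_sub_dvd_one_sub_pow (x ^ d) j

theorem one_sub_pow_dvd_prod_Ico_add (x : R) {d : ℕ} (hd : 0 < d) (m : ℕ) :
    1 - x ^ d ∣ ∏ i ∈ Ico m (m + d), (1 - x ^ (i + 1)) := by
  set k := d * (m / d + 1) with hk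
  have hk_gt : m < k := Nat.lt_mul_div_succ m hd
  have hk_le : k ≤ m + d := by
    rw [hk, mul_add_one]
    exact Nat.add_le_add_right (Nat.mul_div_le m d) d
  have hmem : k - 1 ∈ Ico m (m + d) := by
    rw [mem_Ico]
    omega
  refine (one_sub_pow_dvd_one_sub_pow_of_dvd x ?_).trans (dvd_prod_of_mem _ hmem)
  rw [Nat.sub_add_cancel (by omega)]
  exact dvd_mul_right d _

theorem multiset_prod_one_sub_pow_dvd_prod_range (x : R) (s : Multiset ℕ)
    (hs : ∀ d ∈ s, 0 < d) {n : ℕ} (hn : s.sum ≤ n) :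
    (s.map fun d => 1 - x ^ d).prod ∣ ∏ i ∈ range n, (1 - x ^ (i + 1)) := by
  induction s using Multiset.induction generalizing n with
  | empty => simp
  | cons d t ih =>
    rw [Multiset.sum_cons] at hn
    have hd : 0 < d := hs d (Multiset.mem_cons_self d t)
    have hrest := ih (fun e he => hs e (Multiset.mem_cons_of_mem he)) (n := n - d) (by omega)
    have htop := one_sub_pow_dvd_prod_Ico_add x hd (n - d)
    rw [Nat.sub_add_cancel (by omega)] at htop
    rw [Multiset.map_cons, Multiset.prod_cons, ← prod_range_mul_prod_Ico _ (Nat.sub_le n d),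
      mul_comm]
    exact mul_dvd_mul hrest htop

end OneSubPow

/-- For a permutation of cycle type the partition `λ = (λ_1, …, λ_k)` of `n`, the
rational function `∏_{i=1}^{n}(1 − q^i) / ∏_{i=1}^{k}(1 − q^{λ_i})` is a polynomial
with integer coefficients: the denominator divides the numerator in `ℤ[q]`. -/
theorem graded_character_is_polynomial (n : ℕ) (lam : Nat.Partition n) :
    ∃ f : Polynomial ℤ,
      ∏ i ∈ Finset.range n, (1 - (X : Polynomial ℤ) ^ (i + 1)) =
      (lam.parts.map fun d => 1 - (X : Polynomial ℤ) ^ d).prod * f :=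
  multiset_prod_one_sub_pow_dvd_prod_range X lam.parts (fun _ hd => lam.parts_pos hd)
    lam.parts_sum.le
end

section
/- The sequence of fake degrees b_{λ,i} is not always unimodal: there exists a partition λ and indices i < j < k with b_{λ,i} > b_{λ,j} and b_{λ,j} < b_{λ,k} with b_{λ,j} between nonzero values. -/
open Finset

/-- `T` is a standard Young tableau of shape `μ` (values `0, …, μ.card − 1`):
a bijective filling of the cells of `μ`, strictly increasing along rows and columns,
normalized to be `0` outside `μ`. -/
def IsSYT (μ : YoungDiagram) (T : ℕ × ℕ → ℕ) : Prop :=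
  Set.BijOn T ↑μ.cells (Set.Iio μ.card) ∧
  (∀ c ∈ μ.cells, ∀ c' ∈ μ.cells, c.1 = c'.1 → c.2 < c'.2 → T c < T c') ∧
  (∀ c ∈ μ.cells, ∀ c' ∈ μ.cells, c.2 = c'.2 → c.1 < c'.1 → T c < T c') ∧
  (∀ c, c ∉ μ.cells → T c = 0)

/-- The row index of the cell of `μ` containing the value `v` in the filling `T`. -/
def rowOfValue (μ : YoungDiagram) (T : ℕ × ℕ → ℕ) (v : ℕ) : ℕ :=
  (μ.cells.filter fun c => T c = v).sup Prod.fst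

/-- The major index of the tableau `T`: the sum of the (1-based) entries `j` such that
`j + 1` lies in a strictly lower row than `j`.  With our 0-based values `v`, the value
`v` contributes `v + 1` when `v + 1` lies in a lower row than `v`. -/
def majT (μ : YoungDiagram) (T : ℕ × ℕ → ℕ) : ℕ :=
  ∑ v ∈ Finset.range (μ.card - 1),
    if rowOfValue μ T v < rowOfValue μ T (v + 1) then v + 1 else 0

/-- The fake degree `b_{λ,i}`: the number of standard Young tableaux of shape `λ`
with major index `i`. -/
noncomputable def fakeDeg (μ : YoungDiagram) (i : ℕ) : ℕ :=
  Set.ncard {T : ℕ × ℕ → ℕ | IsSYT μ T ∧ majT μ T = i}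

/-- `f^λ`: the number of standard Young tableaux of shape `λ`. -/
noncomputable def sytCount (μ : YoungDiagram) : ℕ :=
  Set.ncard {T : ℕ × ℕ → ℕ | IsSYT μ T}

/-- The Young diagram of a partition of `n`. -/
def shapeOf {n : ℕ} (p : Nat.Partition n) : YoungDiagram :=
  YoungDiagram.ofRowLens (p.parts.sort (· ≥ ·)) (List.Pairwise.sortedGE (p.parts.pairwise_sort _))

/-! The `2 × 2` square has exactly two standard tableaux: the row reading, whose only descent
is at `2`, and the column reading, with descents at `1` and `3`. So its fake degree polynomial is
`q² + q⁴`, which has an internal zero at `q³`. -/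

def fillOn (μ : YoungDiagram) (f : ℕ × ℕ → ℕ) : ℕ × ℕ → ℕ :=
  fun c => if c ∈ μ.cells then f c else 0

lemma fillOn_of_mem {μ : YoungDiagram} {f : ℕ × ℕ → ℕ} {c : ℕ × ℕ} (hc : c ∈ μ.cells) :
    fillOn μ f c = f c :=
  if_pos hc

/-- An injective filling by `0, …, |μ| - 1` is onto them by counting. -/
lemma isSYT_fillOn {μ : YoungDiagram} {f : ℕ × ℕ → ℕ}
    (hlt : ∀ c ∈ μ.cells, f c < μ.card)
    (hinj : ∀ c ∈ μ.cells, ∀ c' ∈ μ.cells, f c = f c' → c = c')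
    (hrow : ∀ c ∈ μ.cells, ∀ c' ∈ μ.cells, c.1 = c'.1 → c.2 < c'.2 → f c < f c')
    (hcol : ∀ c ∈ μ.cells, ∀ c' ∈ μ.cells, c.2 = c'.2 → c.1 < c'.1 → f c < f c') :
    IsSYT μ (fillOn μ f) := by
  have hmaps : Set.MapsTo (fillOn μ f) μ.cells (Finset.Iio μ.card) := fun c hc => by
    simpa [fillOn_of_mem (Finset.mem_coe.mp hc)] using hlt c hc
  have hinjOn : Set.InjOn (fillOn μ f) μ.cells := fun c hc c' hc' h => by
    rw [fillOn_of_mem (Finset.mem_coe.mp hc), fillOn_of_mem (Finset.mem_coe.mp hc')] at h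
    exact hinj c hc c' hc' h
  have hsurj := Finset.surjOn_of_injOn_of_card_le _ hmaps hinjOn (by simp [YoungDiagram.card])
  rw [Finset.coe_Iio] at hmaps hsurj
  refine ⟨⟨hmaps, hinjOn, hsurj⟩, ?_, ?_, fun c hc => if_neg hc⟩
  · intro c hc c' hc'
    simpa only [fillOn_of_mem hc, fillOn_of_mem hc'] using hrow c hc c' hc'
  · intro c hc c' hc'
    simpa only [fillOn_of_mem hc, fillOn_of_mem hc'] using hcol c hc c' hc'

lemma IsSYT.eq_fillOn {μ : YoungDiagram} {T f : ℕ × ℕ → ℕ} (hT : IsSYT μ T)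
    (hf : ∀ c ∈ μ.cells, T c = f c) : T = fillOn μ f := by
  funext c
  by_cases hc : c ∈ μ.cells
  · rw [fillOn_of_mem hc, hf c hc]
  · rw [hT.2.2.2 c hc, fillOn, if_neg hc]

lemma fakeDeg_eq_card_filter {μ : YoungDiagram} (s : Finset (ℕ × ℕ → ℕ))
    (hs : ∀ T, IsSYT μ T ↔ T ∈ s) (i : ℕ) :
    fakeDeg μ i = #{T ∈ s | majT μ T = i} := by
  rw [fakeDeg, ← Set.ncard_coe_finset]
  congr 1
  ext T
  simp [hs]

def twoByTwo : YoungDiagram := YoungDiagram.ofRowLens [2, 2] (by decide)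

def rowReading : ℕ × ℕ → ℕ := fillOn twoByTwo fun c => 2 * c.1 + c.2

def colReading : ℕ × ℕ → ℕ := fillOn twoByTwo fun c => c.1 + 2 * c.2

lemma cells_twoByTwo : twoByTwo.cells = {(0, 0), (0, 1), (1, 0), (1, 1)} := by decide

lemma isSYT_rowReading : IsSYT twoByTwo rowReading :=
  isSYT_fillOn (by decide) (by decide) (by decide) (by decide)

lemma isSYT_colReading : IsSYT twoByTwo colReading :=
  isSYT_fillOn (by decide) (by decide) (by decide) (by decide)

lemma majT_rowReading : majT twoByTwo rowReading = 2 := by decide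

lemma majT_colReading : majT twoByTwo colReading = 4 := by decide

/-- Both ends are forced (`0` in the corner `(0,0)`, `3` in `(1,1)`); the middle two values
can go either way round. -/
lemma isSYT_twoByTwo_iff (T : ℕ × ℕ → ℕ) :
    IsSYT twoByTwo T ↔ T = rowReading ∨ T = colReading := by
  refine ⟨fun hT => ?_, by rintro (rfl | rfl); exacts [isSYT_rowReading, isSYT_colReading]⟩
  obtain ⟨⟨hmaps, hinj, -⟩, hrow, hcol, -⟩ := id hT
  have hlt (c) (hc : c ∈ twoByTwo.cells) : T c < 4 := hmaps hc
  have h01 := hlt (0, 1) (by decide)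
  have h10 := hlt (1, 0) (by decide)
  have h11 := hlt (1, 1) (by decide)
  have hne : T (0, 1) ≠ T (1, 0) := fun h => by
    simpa using hinj (show (0, 1) ∈ twoByTwo.cells by decide)
      (show (1, 0) ∈ twoByTwo.cells by decide) h
  have h00_01 := hrow (0, 0) (by decide) (0, 1) (by decide) rfl one_pos
  have h00_10 := hcol (0, 0) (by decide) (1, 0) (by decide) rfl one_pos
  have h01_11 := hcol (0, 1) (by decide) (1, 1) (by decide) rfl one_pos
  have h10_11 := hrow (1, 0) (by decide) (1, 1) (by decide) rfl one_pos
  have hends : T (0, 0) = 0 ∧ T (1, 1) = 3 := by omega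
  rcases (by omega : T (0, 1) = 1 ∧ T (1, 0) = 2 ∨ T (0, 1) = 2 ∧ T (1, 0) = 1) with h | h
  · exact .inl (hT.eq_fillOn (by simp [cells_twoByTwo, hends, h]))
  · exact .inr (hT.eq_fillOn (by simp [cells_twoByTwo, hends, h]))

open Classical in
lemma fakeDeg_twoByTwo (i : ℕ) : fakeDeg twoByTwo i = if i = 2 ∨ i = 4 then 1 else 0 := by
  rw [fakeDeg_eq_card_filter {rowReading, colReading} (by simp [isSYT_twoByTwo_iff]),
    Finset.filter_insert, Finset.filter_singleton, majT_rowReading, majT_colReading]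
  split_ifs <;> simp_all <;> omega

/-- The sequence of fake degrees `b_{λ,i}` is not always unimodal: there are a shape
`λ` and indices `i < j < k` with `b_{λ,i} > b_{λ,j}` and `b_{λ,j} < b_{λ,k}`. -/
theorem fakeDeg_not_unimodal :
    ∃ (μ : YoungDiagram) (i j k : ℕ), i < j ∧ j < k ∧
      fakeDeg μ j < fakeDeg μ i ∧ fakeDeg μ j < fakeDeg μ k :=
  ⟨twoByTwo, 2, 3, 4, by simp [fakeDeg_twoByTwo]⟩
end
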